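/- Let R be a commutative local ring. The following are equivalent: (1) K_1(R) (i.e., the 2×2 matrix ring M₂(R)) is quasipolar; (2) K_1(R) is strongly clean; (3) K_s(R) is strongly clean for all s ∈ R; (4) K_s(R) is strongly clean for all s ∈ J(R). -/

import Mathlib

/-- The generalized matrix ring `K_s(R)` with multiplier `s`. -/
@[ext]
structure GenMatrix (R : Type*) (s : R) where
  a : R
  b : R
  c : R
  d : R

namespace GenMatrix

variable {R : Type*} [Ring R] {s : R}

instance : Add (GenMatrix R s) :=
  ⟨fun X Y => ⟨X.a + Y.a, X.b + Y.b, X.c + Y.c, X.d + Y.d⟩⟩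
instance : Neg (GenMatrix R s) := ⟨fun X => ⟨-X.a, -X.b, -X.c, -X.d⟩⟩
instance : Zero (GenMatrix R s) := ⟨⟨0, 0, 0, 0⟩⟩
instance : One (GenMatrix R s) := ⟨⟨1, 0, 0, 1⟩⟩
instance : Mul (GenMatrix R s) :=
  ⟨fun X Y => ⟨X.a * Y.a + s * (X.b * Y.c), X.a * Y.b + X.b * Y.d,
    X.c * Y.a + X.d * Y.c, s * (X.c * Y.b) + X.d * Y.d⟩⟩

@[simp] lemma add_a (X Y : GenMatrix R s) : (X + Y).a = X.a + Y.a := rfl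
@[simp] lemma add_b (X Y : GenMatrix R s) : (X + Y).b = X.b + Y.b := rfl
@[simp] lemma add_c (X Y : GenMatrix R s) : (X + Y).c = X.c + Y.c := rfl
@[simp] lemma add_d (X Y : GenMatrix R s) : (X + Y).d = X.d + Y.d := rfl
@[simp] lemma neg_a (X : GenMatrix R s) : (-X).a = -X.a := rfl
@[simp] lemma neg_b (X : GenMatrix R s) : (-X).b = -X.b := rfl
@[simp] lemma neg_c (X : GenMatrix R s) : (-X).c = -X.c := rfl
@[simp] lemma neg_d (X : GenMatrix R s) : (-X).d = -X.d := rfl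
@[simp] lemma zero_a : (0 : GenMatrix R s).a = 0 := rfl
@[simp] lemma zero_b : (0 : GenMatrix R s).b = 0 := rfl
@[simp] lemma zero_c : (0 : GenMatrix R s).c = 0 := rfl
@[simp] lemma zero_d : (0 : GenMatrix R s).d = 0 := rfl
@[simp] lemma one_a : (1 : GenMatrix R s).a = 1 := rfl
@[simp] lemma one_b : (1 : GenMatrix R s).b = 0 := rfl
@[simp] lemma one_c : (1 : GenMatrix R s).c = 0 := rfl
@[simp] lemma one_d : (1 : GenMatrix R s).d = 1 := rfl
@[simp] lemma mul_a (X Y : GenMatrix R s) : (X * Y).a = X.a * Y.a + s * (X.b * Y.c) := rfl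
@[simp] lemma mul_b (X Y : GenMatrix R s) : (X * Y).b = X.a * Y.b + X.b * Y.d := rfl
@[simp] lemma mul_c (X Y : GenMatrix R s) : (X * Y).c = X.c * Y.a + X.d * Y.c := rfl
@[simp] lemma mul_d (X Y : GenMatrix R s) : (X * Y).d = s * (X.c * Y.b) + X.d * Y.d := rfl

instance : AddCommGroup (GenMatrix R s) where
  add_assoc X Y Z := by ext <;> simp [add_assoc]
  zero_add X := by ext <;> simp
  add_zero X := by ext <;> simp
  add_comm X Y := by ext <;> simp [add_comm]
  neg_add_cancel X := by ext <;> simp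
  nsmul := nsmulRec
  zsmul := zsmulRec

section Central

variable [Fact (s ∈ Set.center R)]

lemma scomm (r : R) : r * s = s * r := Semigroup.mem_center_iff.mp Fact.out r

lemma sshift (r t : R) : r * (s * t) = s * (r * t) := by
  rw [← mul_assoc, scomm (s := s), mul_assoc]

instance : Ring (GenMatrix R s) where
  __ := (inferInstance : AddCommGroup (GenMatrix R s))
  left_distrib X Y Z := by ext <;> simp [mul_add, add_mul] <;> abel
  right_distrib X Y Z := by ext <;> simp [mul_add, add_mul] <;> abel
  zero_mul X := by ext <;> simp
  mul_zero X := by ext <;> simp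
  mul_assoc X Y Z := by
    ext <;> simp only [mul_a, mul_b, mul_c, mul_d, mul_add, add_mul, mul_assoc, sshift] <;> abel
  one_mul X := by ext <;> simp
  mul_one X := by ext <;> simp

end Central

instance central_of_comm {R : Type*} [CommRing R] (s : R) : Fact (s ∈ Set.center R) :=
  ⟨by rw [Set.center_eq_univ]; trivial⟩

/-- `det_s` of a generalized matrix over a commutative ring. -/
def dets {R : Type*} {s : R} [CommRing R] (A : GenMatrix R s) : R :=
  A.a * A.d - s * (A.b * A.c)

/-- The trace of a generalized matrix. -/
def tr {R : Type*} {s : R} [Ring R] (A : GenMatrix R s) : R := A.a + A.d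

end GenMatrix

/-- An element `a` is quasinilpotent if `1 + a*x` is a unit for every `x` commuting with `a`. -/
def IsQuasinilpotent {R : Type*} [Ring R] (a : R) : Prop :=
  ∀ x : R, a * x = x * a → IsUnit (1 + a * x)

/-- An element `a` is quasipolar if there is an idempotent `p` in the double commutant of `a`
with `a + p` a unit and `a * p` quasinilpotent. -/
def IsQuasipolar {R : Type*} [Ring R] (a : R) : Prop :=
  ∃ p : R, IsIdempotentElem p ∧ (∀ y : R, y * a = a * y → p * y = y * p) ∧
    IsUnit (a + p) ∧ IsQuasinilpotent (a * p)

/-- A ring is quasipolar if every element is quasipolar. -/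
def IsQuasipolarRing (R : Type*) [Ring R] : Prop := ∀ a : R, IsQuasipolar a

/-- An element is strongly clean if it is the sum of an idempotent and a unit that commute. -/
def IsStronglyClean {R : Type*} [Ring R] (a : R) : Prop :=
  ∃ e u : R, IsIdempotentElem e ∧ IsUnit u ∧ a = e + u ∧ e * u = u * e

/-- A ring is strongly clean if every element is strongly clean. -/
def IsStronglyCleanRing (R : Type*) [Ring R] : Prop := ∀ a : R, IsStronglyClean a

/-- `a` is similar to `b` if `b = u⁻¹ * a * u` for some unit `u`. -/
def IsSimilar {R : Type*} [Ring R] (a b : R) : Prop :=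
  ∃ u : Rˣ, b = ↑u⁻¹ * a * ↑u

/-- The Jacobson radical of a ring: the intersection of all maximal left ideals. -/
def JacobsonRadical (R : Type*) [Ring R] : Ideal R := Ideal.jacobson ⊥

/-! Over a commutative local ring `R` with maximal ideal `m`, all four conditions are equivalent
to: every quadratic `x² - x + w` with `w ∈ m` has a root in `R`.

Given such roots, let `A ∈ K_s(R)` with `dets A ∈ m` and `tr A` a unit. Its characteristic
polynomial `x² - tr A · x + dets A` then has a root `α ∈ m` and the unit root `tr A - α`, and the
projection onto the `α`-eigenspace is an idempotent making `A` quasipolar; when `dets A` is a unit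
or `tr A ∈ m`, the idempotents `0` and `1` do. Quasipolar elements of any ring are strongly clean.

Conversely, if `s * c = -w` with `w ∈ m`, the matrix `[[0, 1], [c, 1]]` of `K_s(R)` has
characteristic polynomial `x² - x + w`. An idempotent `E` commuting with it is a polynomial
`x + y · [[0, 1], [c, 1]]` in it, and when `E ≠ 0, 1` the coefficient `y` is a unit and
`(x + y) / y` is a root of `x² - x + w`. -/

open IsLocalRing

section StronglyClean

variable {R : Type*} [Ring R]

lemma IsIdempotentElem.isUnit_mul_one_sub_add_mul {e x y : R} (he : IsIdempotentElem e)
    (hx : IsUnit x) (hy : IsUnit y) (hex : Commute e x) (hey : Commute e y) :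
    IsUnit (x * (1 - e) + y * e) := by
  obtain ⟨X, rfl⟩ := hx
  obtain ⟨Y, rfl⟩ := hy
  have hex' := hex.units_inv_right
  have hey' := hey.units_inv_right
  refine ⟨⟨_, ↑X⁻¹ * (1 - e) + ↑Y⁻¹ * e, ?_, ?_⟩, rfl⟩ <;>
  · simp only [mul_add, add_mul, mul_sub, sub_mul, mul_one, mul_assoc, hex.left_comm,
      hey.left_comm, hex'.left_comm, hey'.left_comm, hex.eq, hex'.eq, he.eq, Units.mul_inv,
      Units.inv_mul, Units.mul_inv_cancel_left, Units.inv_mul_cancel_left]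
    abel

lemma IsUnit.isQuasipolar {a : R} (ha : IsUnit a) : IsQuasipolar a :=
  ⟨0, .zero, fun y _ => by rw [zero_mul, mul_zero], by rwa [add_zero],
    fun x _ => by rw [mul_zero, zero_mul, add_zero]; exact isUnit_one⟩

lemma IsQuasipolar.isStronglyClean {a : R} (ha : IsQuasipolar a) : IsStronglyClean a := by
  obtain ⟨p, hp, hp_comm, hunit, hqn⟩ := ha
  have hpa : Commute p a := hp_comm a rfl
  have hunit' : IsUnit (1 - a * p) := by
    simpa [sub_eq_add_neg] using hqn (-1) (by rw [mul_neg_one, neg_one_mul])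
  -- `a - p` is the unit `a + p` on `(1 - p) R` and the unit `-(1 - a p)` on `p R`.
  have hdecomp : a - p = (a + p) * (1 - p) + -(1 - a * p) * p := by
    simp only [mul_sub, add_mul, sub_mul, neg_mul, one_mul, mul_one, mul_assoc, hp.eq]
    abel
  refine ⟨p, a - p, hp, ?_, by abel, (hpa.sub_right (Commute.refl p)).eq⟩
  rw [hdecomp]
  exact hp.isUnit_mul_one_sub_add_mul hunit hunit'.neg (hpa.add_right (Commute.refl p))
    ((Commute.one_right p).sub_right (hpa.mul_right (Commute.refl p))).neg_right

end StronglyClean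

namespace IsLocalRing

variable {R : Type*} [CommRing R] [IsLocalRing R]

lemma isUnit_add_of_mem_maximalIdeal {u x : R} (hu : IsUnit u) (hx : x ∈ maximalIdeal R) :
    IsUnit (u + x) := by
  rw [← notMem_maximalIdeal] at hu ⊢
  exact fun h => hu (by simpa using sub_mem h hx)

lemma exists_root_mem_maximalIdeal {w α : R} (hw : w ∈ maximalIdeal R)
    (hα : α * α - α + w = 0) : ∃ β ∈ maximalIdeal R, β * β - β + w = 0 := by
  have hmem : α * (1 - α) ∈ maximalIdeal R := by
    rw [show α * (1 - α) = w by linear_combination -hα]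
    exact hw
  rcases (maximalIdeal.isMaximal R).isPrime.mem_or_mem hmem with h | h
  · exact ⟨α, h, hα⟩
  · exact ⟨1 - α, h, by linear_combination hα⟩

variable (R) in
def HasQuadraticRoots : Prop :=
  ∀ w ∈ maximalIdeal R, ∃ α : R, α * α - α + w = 0

lemma HasQuadraticRoots.exists_root_mem {t d : R} (h : HasQuadraticRoots R)
    (ht : IsUnit t) (hd : d ∈ maximalIdeal R) :
    ∃ α ∈ maximalIdeal R, α * α - t * α + d = 0 := by
  obtain ⟨v, hv⟩ := ht.exists_right_inv
  have hdv : d * (v * v) ∈ maximalIdeal R := Ideal.mul_mem_right _ _ hd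
  obtain ⟨β₀, hβ₀⟩ := h _ hdv
  obtain ⟨β, hβ, hβ_root⟩ := exists_root_mem_maximalIdeal hdv hβ₀
  refine ⟨t * β, Ideal.mul_mem_left _ t hβ, ?_⟩
  linear_combination (t * t) * hβ_root - (d * (t * v + 1)) * hv

end IsLocalRing

namespace GenMatrix

section CommRing

variable {R : Type*} [CommRing R] {s : R}

@[simp] lemma sub_a (X Y : GenMatrix R s) : (X - Y).a = X.a - Y.a := by simp [sub_eq_add_neg]
@[simp] lemma sub_b (X Y : GenMatrix R s) : (X - Y).b = X.b - Y.b := by simp [sub_eq_add_neg]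
@[simp] lemma sub_c (X Y : GenMatrix R s) : (X - Y).c = X.c - Y.c := by simp [sub_eq_add_neg]
@[simp] lemma sub_d (X Y : GenMatrix R s) : (X - Y).d = X.d - Y.d := by simp [sub_eq_add_neg]

lemma dets_mul (X Y : GenMatrix R s) : dets (X * Y) = dets X * dets Y := by
  simp only [dets, mul_a, mul_b, mul_c, mul_d]
  ring

def detsHom : GenMatrix R s →* R where
  toFun := dets
  map_one' := by simp [dets]
  map_mul' := dets_mul

lemma isUnit_iff_isUnit_dets (X : GenMatrix R s) : IsUnit X ↔ IsUnit (dets X) := by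
  refine ⟨IsUnit.map (detsHom : GenMatrix R s →* R), fun h => ?_⟩
  obtain ⟨v, hv⟩ := h.exists_right_inv
  simp only [dets] at hv
  refine isUnit_iff_exists.mpr ⟨⟨v * X.d, -(v * X.b), -(v * X.c), v * X.a⟩, ?_, ?_⟩ <;>
    ext <;> simp only [mul_a, mul_b, mul_c, mul_d, one_a, one_b, one_c, one_d] <;>
    first | ring1 | linear_combination hv

lemma dets_one_sub (X : GenMatrix R s) : dets (1 - X) = 1 + (dets X - tr X) := by
  simp only [dets, tr, sub_a, sub_b, sub_c, sub_d, one_a, one_b, one_c, one_d]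
  ring

/-- Cayley–Hamilton, `X * X = tr X • X - dets X • 1`, in trace form. -/
lemma tr_mul_self_mul (X Z : GenMatrix R s) :
    tr (X * X * Z) = tr X * tr (X * Z) - dets X * tr Z := by
  simp only [dets, tr, mul_a, mul_b, mul_c, mul_d]
  ring

/-- For a root `α` of the characteristic polynomial of `A` with `2 α - tr A` a unit, this is
`(A - β) / (α - β)` with `β = tr A - α` the other root: the projection onto the `α`-eigenspace. -/
noncomputable def eigenprojection (A : GenMatrix R s) (α : R) : GenMatrix R s :=
  let γ := Ring.inverse (2 * α - tr A)
  ⟨γ * (α - A.d), γ * A.b, γ * A.c, γ * (α - A.a)⟩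

lemma commute_eigenprojection {A Y : GenMatrix R s} (hY : Commute Y A) (α : R) :
    Commute (eigenprojection A α) Y := by
  have ha := congrArg a hY.eq
  have hb := congrArg b hY.eq
  have hc := congrArg c hY.eq
  have hd := congrArg d hY.eq
  simp only [mul_a, mul_b, mul_c, mul_d] at ha hb hc hd
  set γ := Ring.inverse (2 * α - tr A)
  ext <;> simp only [eigenprojection, mul_a, mul_b, mul_c, mul_d]
  · linear_combination (-γ) * ha
  · linear_combination (-γ) * hb
  · linear_combination (-γ) * hc
  · linear_combination (-γ) * hd

section Eigenprojection

variable {A : GenMatrix R s} {α : R} (hα : α * α - tr A * α + dets A = 0)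
  (hu : IsUnit (2 * α - tr A))
include hα

lemma dets_eigenprojection : dets (eigenprojection A α) = 0 := by
  simp only [dets, tr, eigenprojection] at hα ⊢
  linear_combination Ring.inverse (2 * α - (A.a + A.d)) ^ 2 * hα

include hu

lemma isIdempotentElem_eigenprojection : IsIdempotentElem (eigenprojection A α) := by
  have hγ := Ring.inverse_mul_cancel _ hu
  simp only [dets, tr] at hα hγ
  set γ := Ring.inverse (2 * α - (A.a + A.d))
  ext <;> simp only [eigenprojection, tr, mul_a, mul_b, mul_c, mul_d]
  · linear_combination (γ * (α - A.d)) * hγ - (γ * γ) * hα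
  · linear_combination (γ * A.b) * hγ
  · linear_combination (γ * A.c) * hγ
  · linear_combination (γ * (α - A.a)) * hγ - (γ * γ) * hα

lemma dets_add_eigenprojection : dets (A + eigenprojection A α) = (α + 1) * (tr A - α) := by
  have hγ := Ring.inverse_mul_cancel _ hu
  simp only [dets, tr] at hα hγ ⊢
  set γ := Ring.inverse (2 * α - (A.a + A.d))
  simp only [eigenprojection, tr, add_a, add_b, add_c, add_d]
  linear_combination (1 + γ * γ + 2 * γ) * hα + ((A.a + A.d) - α) * hγ

lemma tr_mul_eigenprojection : tr (A * eigenprojection A α) = α := by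
  have hγ := Ring.inverse_mul_cancel _ hu
  simp only [dets, tr] at hα hγ ⊢
  set γ := Ring.inverse (2 * α - (A.a + A.d))
  simp only [eigenprojection, tr, mul_a, mul_d]
  linear_combination α * hγ - 2 * γ * hα

end Eigenprojection

def companion (c : R) : GenMatrix R s := ⟨0, 1, c, 1⟩

lemma dets_companion {c w : R} (hsc : s * c = -w) : dets (companion c : GenMatrix R s) = w := by
  simp only [dets, companion]
  linear_combination -hsc

lemma dets_one_sub_companion {c w : R} (hsc : s * c = -w) :
    dets (1 - companion c : GenMatrix R s) = w := by
  rw [dets_one_sub, dets_companion hsc]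
  simp [tr, companion]

lemma entries_of_commute_companion {E : GenMatrix R s} {c : R} (h : Commute E (companion c)) :
    E.c = c * E.b ∧ E.d = E.a + E.b := by
  have hb := congrArg b h.eq
  have hc := congrArg GenMatrix.c h.eq
  simp only [companion, mul_b, mul_c] at hb hc
  constructor
  · linear_combination -hc - c * hb
  · linear_combination -hb

end CommRing

section IsLocalRing

variable {R : Type*} [CommRing R] [IsLocalRing R] {s : R}

lemma dets_mem_of_isIdempotentElem {E : GenMatrix R s} (hE : IsIdempotentElem E) (h1 : E ≠ 1) :
    dets E ∈ maximalIdeal R := by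
  by_contra h
  rw [notMem_maximalIdeal, ← isUnit_iff_isUnit_dets] at h
  exact h1 ((IsIdempotentElem.iff_eq_one_of_isUnit h).mp hE)

lemma tr_sub_one_mem_of_isIdempotentElem {E : GenMatrix R s} (hE : IsIdempotentElem E)
    (h0 : E ≠ 0) (h1 : E ≠ 1) : tr E - 1 ∈ maximalIdeal R := by
  have h1' : 1 - E ≠ 1 := fun h => h0 (sub_eq_self.mp h)
  rw [show tr E - 1 = dets E - dets (1 - E) by rw [dets_one_sub]; ring]
  exact sub_mem (dets_mem_of_isIdempotentElem hE h1) (dets_mem_of_isIdempotentElem hE.one_sub h1')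

lemma exists_root_of_commute_companion {c w : R} (hsc : s * c = -w) {E : GenMatrix R s}
    (hE : IsIdempotentElem E) (h0 : E ≠ 0) (h1 : E ≠ 1) (hcomm : Commute E (companion c)) :
    ∃ α : R, α * α - α + w = 0 := by
  obtain ⟨hEc, hEd⟩ := entries_of_commute_companion hcomm
  have htr := tr_sub_one_mem_of_isIdempotentElem hE h0 h1
  have ha := congrArg GenMatrix.a hE.eq
  have hb := congrArg GenMatrix.b hE.eq
  simp only [tr, mul_a, mul_b, hEc, hEd] at ha hb htr
  set x := E.a
  set y := E.b
  have hx : x * (x - 1) = w * (y * y) := by linear_combination ha - y * y * hsc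
  -- if `y ∈ m`, then `x ≡ 0` or `x ≡ 1` mod `m`, so `tr E = 2 x + y ≢ 1`
  have hy : IsUnit y := by
    by_contra hy
    rw [← notMem_maximalIdeal, not_not] at hy
    apply notMem_maximalIdeal.mpr (isUnit_one : IsUnit (1 : R))
    have hxm : x * (x - 1) ∈ maximalIdeal R :=
      hx ▸ Ideal.mul_mem_left _ w (Ideal.mul_mem_left _ y hy)
    rcases (maximalIdeal.isMaximal R).isPrime.mem_or_mem hxm with hx0 | hx1
    · rw [show (1 : R) = x + (x + y) - (x + (x + y) - 1) by ring]
      exact sub_mem (add_mem hx0 (add_mem hx0 hy)) htr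
    · rw [show (1 : R) = x + (x + y) - 1 - 2 * (x - 1) - y by ring]
      exact sub_mem (sub_mem htr (Ideal.mul_mem_left _ 2 hx1)) hy
  obtain ⟨v, hv⟩ := hy.exists_left_inv
  have htr1 : x + (x + y) = 1 := by
    linear_combination v * hb - (x + (x + y) - 1) * hv
  refine ⟨(x + y) * v, ?_⟩
  linear_combination v * v * (x * htr1 - hx) + (x * v + y * v - w * (v * y + 1)) * hv

lemma exists_root_of_isStronglyClean_companion {c w : R} (hsc : s * c = -w)
    (hw : w ∈ maximalIdeal R) (h : IsStronglyClean (companion c : GenMatrix R s)) :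
    ∃ α : R, α * α - α + w = 0 := by
  obtain ⟨E, u, hE, hu, hA, hEu⟩ := h
  have hw' : ¬ IsUnit w := fun h => notMem_maximalIdeal.mpr h hw
  have h0 : E ≠ 0 := by
    rintro rfl
    rw [zero_add] at hA
    rw [← dets_companion hsc, ← isUnit_iff_isUnit_dets, hA] at hw'
    exact hw' hu
  have h1 : E ≠ 1 := by
    rintro rfl
    have h1_sub : 1 - companion c = -u := by rw [hA]; abel
    rw [← dets_one_sub_companion hsc, ← isUnit_iff_isUnit_dets, h1_sub] at hw'
    exact hw' hu.neg
  have hcomm : Commute E (companion c) := by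
    rw [hA]
    exact (Commute.refl E).add_right hEu
  exact exists_root_of_commute_companion hsc hE h0 h1 hcomm


lemma isUnit_one_sub_mul_self_mul {X : GenMatrix R s} (ht : tr X ∈ maximalIdeal R)
    (hd : dets X ∈ maximalIdeal R) (Z : GenMatrix R s) : IsUnit (1 - X * X * Z) := by
  rw [isUnit_iff_isUnit_dets, dets_one_sub, dets_mul, dets_mul, tr_mul_self_mul]
  refine isUnit_add_of_mem_maximalIdeal isUnit_one (sub_mem ?_ ?_)
  · exact Ideal.mul_mem_right _ _ (Ideal.mul_mem_right _ _ hd)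
  · exact sub_mem (Ideal.mul_mem_right _ _ ht) (Ideal.mul_mem_right _ _ hd)

lemma isQuasinilpotent_of_tr_mem_of_dets_mem {X : GenMatrix R s} (ht : tr X ∈ maximalIdeal R)
    (hd : dets X ∈ maximalIdeal R) : IsQuasinilpotent X := by
  intro Y hXY
  have hsq : (1 + X * Y) * (1 - X * Y) = 1 - X * X * (Y * Y) := by
    have : X * Y * (X * Y) = X * X * (Y * Y) := by
      rw [mul_assoc, ← mul_assoc Y, ← hXY, mul_assoc, mul_assoc]
    rw [← this]
    noncomm_ring
  have hcomm : Commute (1 + X * Y) (1 - X * Y) :=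
    (Commute.one_right _).sub_right ((Commute.one_left _).add_left (Commute.refl _))
  exact (hcomm.isUnit_mul_iff.mp (hsq ▸ isUnit_one_sub_mul_self_mul ht hd _)).1

lemma isQuasipolar_of_tr_mem_of_dets_mem {A : GenMatrix R s} (ht : tr A ∈ maximalIdeal R)
    (hd : dets A ∈ maximalIdeal R) : IsQuasipolar A := by
  have hqn := isQuasinilpotent_of_tr_mem_of_dets_mem ht hd
  refine ⟨1, .one, fun y _ => by rw [one_mul, mul_one], ?_, by rwa [mul_one]⟩
  simpa [add_comm] using hqn 1 (by rw [mul_one, one_mul])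

lemma isQuasipolar_of_isUnit_tr (h : HasQuadraticRoots R) {A : GenMatrix R s}
    (ht : IsUnit (tr A)) (hd : dets A ∈ maximalIdeal R) : IsQuasipolar A := by
  obtain ⟨α, hα, hα_root⟩ := h.exists_root_mem ht hd
  have hu : IsUnit (2 * α - tr A) := by
    convert (isUnit_add_of_mem_maximalIdeal ht (Ideal.mul_mem_left _ (-2) hα)).neg using 1
    ring
  refine ⟨eigenprojection A α, isIdempotentElem_eigenprojection hα_root hu,
    fun Y hY => (commute_eigenprojection hY α).eq, ?_, ?_⟩
  · rw [isUnit_iff_isUnit_dets, dets_add_eigenprojection hα_root hu, add_comm α, sub_eq_add_neg]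
    exact (isUnit_add_of_mem_maximalIdeal isUnit_one hα).mul
      (isUnit_add_of_mem_maximalIdeal ht (neg_mem hα))
  · refine isQuasinilpotent_of_tr_mem_of_dets_mem ?_ ?_
    · rwa [tr_mul_eigenprojection hα_root hu]
    · rw [dets_mul, dets_eigenprojection hα_root, mul_zero]
      exact zero_mem _

end IsLocalRing

end GenMatrix

open GenMatrix in
theorem IsLocalRing.HasQuadraticRoots.isQuasipolarRing {R : Type*} [CommRing R] [IsLocalRing R]
    (h : HasQuadraticRoots R) (s : R) :
    IsQuasipolarRing (GenMatrix R s) := by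
  intro A
  by_cases hd : IsUnit (dets A)
  · exact ((isUnit_iff_isUnit_dets A).mpr hd).isQuasipolar
  rw [← notMem_maximalIdeal, not_not] at hd
  by_cases ht : IsUnit (tr A)
  · exact isQuasipolar_of_isUnit_tr h ht hd
  · rw [← notMem_maximalIdeal, not_not] at ht
    exact isQuasipolar_of_tr_mem_of_dets_mem ht hd

/-- for a commutative local ring `R`, the following are equivalent:
(1) `K_1(R) = M₂(R)` is quasipolar; (2) `K_1(R)` is strongly clean; (3) `K_s(R)` is
strongly clean for all `s ∈ R`; (4) `K_s(R)` is strongly clean for all `s ∈ J(R)`. -/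
theorem genMatrix_one_quasipolar_tfae {R : Type*} [CommRing R] [IsLocalRing R] :
    List.TFAE
      [IsQuasipolarRing (GenMatrix R (1 : R)),
       IsStronglyCleanRing (GenMatrix R (1 : R)),
       ∀ s : R, IsStronglyCleanRing (GenMatrix R s),
       ∀ s ∈ JacobsonRadical R, IsStronglyCleanRing (GenMatrix R s)] := by
  tfae_have 1 → 2 := fun h A => (h A).isStronglyClean
  tfae_have 2 → 3 := by
    intro h s A
    have hroots : HasQuadraticRoots R := fun w hw =>
      GenMatrix.exists_root_of_isStronglyClean_companion (c := -w) (one_mul _) hw (h _)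
    exact (hroots.isQuasipolarRing s A).isStronglyClean
  tfae_have 3 → 4 := fun h s _ => h s
  tfae_have 4 → 1 := by
    intro h
    refine HasQuadraticRoots.isQuasipolarRing (fun w hw => ?_) 1
    have hJ : -w ∈ JacobsonRadical R := by
      rw [JacobsonRadical, jacobson_eq_maximalIdeal ⊥ bot_ne_top]
      exact neg_mem hw
    exact GenMatrix.exists_root_of_isStronglyClean_companion (c := 1) (mul_one _) hw (h _ hJ _)
  tfae_finish
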